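/- For every integer m ≥ 2, the asymptotic density of m-free positive integers is 1/ζ(m), i.e., (1/n)·#{k ≤ n : no prime p satisfies p^m ∣ k} → 1/ζ(m) as n → ∞. -/

import Mathlib

/-!
Möbius inversion gives `[k is m-free] = ∑_{d^m ∣ k} μ d`: the squarefree `d` with `d^m ∣ k` are
exactly the divisors of the product of the primes `p` with `p^m ∣ k`. Summing over `k ≤ n`,
the number of m-free `k ≤ n` is `∑_{d ≤ n} μ d ⌊n / d^m⌋`. After division by `n` the `d`-th term
tends to `μ d / d^m` and is dominated by `1 / d^m`, so by Tannery's theorem the density is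
`∑ μ d / d^m`, which is `1 / ζ(m)` because the Dirichlet series of `μ` and of `1` are inverse.
-/

open Filter Topology Finset ArithmeticFunction
open scoped ArithmeticFunction.Moebius

theorem Nat.pow_dvd_iff_of_squarefree {d k : ℕ} (m : ℕ) (hd : Squarefree d) :
    d ^ m ∣ k ↔ ∀ p ∈ d.primeFactors, p ^ m ∣ k := by
  refine ⟨fun h p hp => (pow_dvd_pow_of_dvd (Nat.dvd_of_mem_primeFactors hp) m).trans h,
    fun h => ?_⟩
  rw [← Nat.prod_primeFactors_of_squarefree hd, ← prod_pow]
  refine prod_dvd_of_isRelPrime (fun p hp q hq hpq => ?_) h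
  exact Nat.coprime_iff_isRelPrime.mp <| Nat.Coprime.pow m m <|
    (Nat.coprime_primes (Nat.prime_of_mem_primeFactors hp)
      (Nat.prime_of_mem_primeFactors hq)).mpr hpq

theorem ArithmeticFunction.sum_divisors_moebius (n : ℕ) :
    ∑ d ∈ n.divisors, μ d = if n = 1 then 1 else 0 := by
  have h := congr($moebius_mul_coe_zeta n)
  rwa [coe_mul_zeta_apply, one_apply] at h

open scoped Classical in
theorem ArithmeticFunction.sum_moebius_pow_dvd {m k : ℕ} (hm : m ≠ 0) (hk : k ≠ 0) :
    ∑ d ∈ k.divisors with d ^ m ∣ k, μ d = if ¬∃ p, p.Prime ∧ p ^ m ∣ k then 1 else 0 := by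
  set S := {p ∈ k.primeFactors | p ^ m ∣ k}
  have hS : ∀ p ∈ S, p.Prime := fun p hp => Nat.prime_of_mem_primeFactors (mem_filter.mp hp).1
  have hr : ∏ p ∈ S, p ≠ 0 := prod_ne_zero_iff.mpr fun p hp => (hS p hp).ne_zero
  have hSk : ∀ d, Squarefree d → (d ∈ k.divisors ∧ d ^ m ∣ k ↔ d.primeFactors ⊆ S) := by
    intro d hd
    rw [Nat.pow_dvd_iff_of_squarefree m hd]
    refine ⟨fun ⟨hdk, h⟩ p hp => mem_filter.mpr
      ⟨Nat.primeFactors_mono (Nat.dvd_of_mem_divisors hdk) hk hp, h p hp⟩, fun h => ?_⟩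
    have hdm : ∀ p ∈ d.primeFactors, p ^ m ∣ k := fun p hp => (mem_filter.mp (h hp)).2
    refine ⟨Nat.mem_divisors.mpr ⟨?_, hk⟩, hdm⟩
    exact (dvd_pow_self d hm).trans ((Nat.pow_dvd_iff_of_squarefree m hd).mpr hdm)
  have hSr : ∀ d, Squarefree d → (d ∈ (∏ p ∈ S, p).divisors ↔ d.primeFactors ⊆ S) := by
    intro d hd
    conv_lhs => rw [← Nat.prod_primeFactors_of_squarefree hd]
    rw [Nat.mem_divisors, Nat.prod_primeFactors_dvd_iff hr, Nat.primeFactors_prod hS]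
    simp [hr]
  have hS1 : ∏ p ∈ S, p = 1 ↔ ¬∃ p, p.Prime ∧ p ^ m ∣ k := by
    have hS_empty : ∏ p ∈ S, p = 1 ↔ S = ∅ :=
      ⟨fun h => by rw [← Nat.primeFactors_prod hS, h, Nat.primeFactors_one],
        fun h => by rw [h, prod_empty]⟩
    rw [hS_empty, filter_eq_empty_iff]
    refine ⟨fun h ⟨p, hp, hpk⟩ => ?_,
      fun h p hp hpk => h ⟨p, Nat.prime_of_mem_primeFactors hp, hpk⟩⟩
    exact h (Nat.mem_primeFactors.mpr ⟨hp, (dvd_pow_self p hm).trans hpk, hk⟩) hpk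
  calc ∑ d ∈ k.divisors with d ^ m ∣ k, μ d
      = ∑ d ∈ (∏ p ∈ S, p).divisors, μ d := by
        rw [← sum_filter_of_ne (s := (∏ p ∈ S, p).divisors) (p := Squarefree)
            fun d _ => moebius_ne_zero_iff_squarefree.mp,
          ← sum_filter_of_ne (p := Squarefree) fun d _ => moebius_ne_zero_iff_squarefree.mp,
          filter_filter]
        congr 1
        ext d
        simp only [mem_filter, ← and_assoc]
        exact and_congr_left fun hd => (hSk d hd).trans (hSr d hd).symm
    _ = _ := by simp only [sum_divisors_moebius, hS1]

open scoped Classical in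
theorem card_mfree_Icc_eq_sum_moebius {m : ℕ} (hm : m ≠ 0) (n : ℕ) :
    (#{k ∈ Icc 1 n | ¬∃ p, p.Prime ∧ p ^ m ∣ k} : ℤ) = ∑ d ∈ Icc 1 n, μ d * (n / d ^ m : ℕ) := by
  calc (#{k ∈ Icc 1 n | ¬∃ p, p.Prime ∧ p ^ m ∣ k} : ℤ)
      = ∑ k ∈ Icc 1 n, ∑ d ∈ k.divisors with d ^ m ∣ k, μ d := by
        rw [card_filter, Nat.cast_sum]
        refine sum_congr rfl fun k hk => ?_
        rw [sum_moebius_pow_dvd hm (by grind), Nat.cast_ite, Nat.cast_one, Nat.cast_zero]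
    _ = ∑ d ∈ Icc 1 n, ∑ k ∈ Icc 1 n with d ^ m ∣ k, μ d := by
        refine sum_comm' fun k d => ?_
        simp only [mem_Icc, mem_filter, Nat.mem_divisors]
        constructor
        · rintro ⟨hk, ⟨hdk, hk0⟩, hdmk⟩
          exact ⟨⟨hk, hdmk⟩, Nat.pos_of_dvd_of_pos hdk (by omega),
            (Nat.le_of_dvd (by omega) hdk).trans hk.2⟩
        · rintro ⟨⟨hk, hdmk⟩, hd⟩
          exact ⟨hk, ⟨(dvd_pow_self d hm).trans hdmk, by omega⟩, hdmk⟩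
    _ = ∑ d ∈ Icc 1 n, μ d * (n / d ^ m : ℕ) := by
        refine sum_congr rfl fun d _ => ?_
        have h := Nat.Ioc_filter_dvd_card_eq_div n (d ^ m)
        rw [← Icc_add_one_left_eq_Ioc, zero_add] at h
        rw [sum_const, h, nsmul_eq_mul, mul_comm]

theorem natCast_div_div_self_le (n q : ℕ) : ((n / q : ℕ) : ℝ) / n ≤ 1 / q := by
  rcases n.eq_zero_or_pos with rfl | hn
  · simp
  rw [div_le_iff₀ (by positivity), one_div_mul_eq_div]
  exact Nat.cast_div_le

theorem tendsto_natCast_div_div_self (q : ℕ) :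
    Tendsto (fun n : ℕ => ((n / q : ℕ) : ℝ) / n) atTop (𝓝 (1 / q)) := by
  rcases q.eq_zero_or_pos with rfl | hq
  · simp
  have h := (tendsto_nat_floor_div_atTop.comp (tendsto_natCast_atTop_atTop.atTop_div_const
    (by positivity : (0 : ℝ) < q))).mul_const (1 / (q : ℝ))
  rw [one_mul] at h
  refine h.congr' ((eventually_ne_atTop 0).mono fun n hn => ?_)
  simp only [Function.comp_apply, Nat.floor_div_eq_div]
  field_simp

theorem tendsto_sum_mul_div_pow_div {a : ℕ → ℝ} {C : ℝ} (ha : ∀ d, |a d| ≤ C) {m : ℕ}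
    (hm : 1 < m) :
    Tendsto (fun n : ℕ => (∑ d ∈ Icc 1 n, a d * (n / d ^ m : ℕ)) / n) atTop
      (𝓝 (∑' d, a d / d ^ m)) := by
  have hsum_eq_tsum : ∀ n : ℕ, (∑ d ∈ Icc 1 n, a d * (n / d ^ m : ℕ)) / n
      = ∑' d, a d * (((n / d ^ m : ℕ) : ℝ) / n) := by
    intro n
    rw [sum_div, tsum_eq_sum (s := Icc 1 n) fun d hd => ?_]
    · simp only [mul_div_assoc]
    have : n / d ^ m = 0 := by
      -- for `d = 0` we have `d ^ m = 0`, and `n / 0 = 0` in `ℕ`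
      rcases Nat.eq_zero_or_pos d with rfl | hd0
      · simp [zero_pow (by omega : m ≠ 0)]
      · exact Nat.div_eq_of_lt ((show n < d by grind).trans_le (Nat.le_self_pow (by omega) d))
    simp [this]
  simp_rw [hsum_eq_tsum, div_eq_mul_one_div (a _)]
  refine tendsto_tsum_of_dominated_convergence
    ((Real.summable_one_div_nat_pow.mpr hm).mul_left C)
    (fun d => by exact_mod_cast (tendsto_natCast_div_div_self (d ^ m)).const_mul (a d))
    (Eventually.of_forall fun n d => ?_)
  have hnonneg : (0 : ℝ) ≤ ((n / d ^ m : ℕ) : ℝ) / n := by positivity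
  rw [norm_mul, Real.norm_eq_abs, Real.norm_eq_abs, abs_of_nonneg hnonneg]
  exact mul_le_mul (ha d) (by exact_mod_cast natCast_div_div_self_le n (d ^ m)) (by positivity)
    ((abs_nonneg _).trans (ha d))

theorem LSeries_ofReal_natCast_eq_tsum {m : ℕ} (hm : m ≠ 0) (f : ℕ → ℝ) :
    LSeries (fun n => (f n : ℂ)) m = ((∑' n : ℕ, f n / n ^ m : ℝ) : ℂ) := by
  rw [Complex.ofReal_tsum]
  refine tsum_congr fun n => ?_
  rcases eq_or_ne n 0 with rfl | hn
  · simp [hm]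
  rw [LSeries.term_of_ne_zero hn, Complex.cpow_natCast]
  push_cast
  rfl

theorem tsum_one_div_pow_mul_tsum_moebius_div_pow {m : ℕ} (hm : 1 < m) :
    (∑' n : ℕ, 1 / (n : ℝ) ^ m) * ∑' n : ℕ, (μ n : ℝ) / n ^ m = 1 := by
  have h := LSeries_one_mul_Lseries_moebius (s := m) (by simpa using hm)
  have h1 := LSeries_ofReal_natCast_eq_tsum (m := m) (by omega) fun _ => 1
  have hμ := LSeries_ofReal_natCast_eq_tsum (m := m) (by omega) fun n => (μ n : ℝ)
  simp only [Complex.ofReal_one, Complex.ofReal_intCast] at h1 hμ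
  rw [Pi.one_def, h1, hμ] at h
  exact_mod_cast h

open scoped Classical in
theorem mfree_density (m : ℕ) (hm : 2 ≤ m) :
    Tendsto (fun n : ℕ =>
      (((Finset.Icc 1 n).filter (fun k => ¬∃ p : ℕ, p.Prime ∧ p ^ m ∣ k)).card : ℝ) / (n : ℝ))
      atTop (nhds (1 / ∑' j : ℕ+, (1 : ℝ) / (j : ℝ) ^ m)) := by
  have hm1 : 1 < m := hm
  have hζ : ∑' j : ℕ+, (1 : ℝ) / (j : ℝ) ^ m = ∑' n : ℕ, 1 / (n : ℝ) ^ m := by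
    simpa [zero_pow (by omega : m ≠ 0)] using
      tsum_zero_pnat_eq_tsum_nat (Real.summable_one_div_nat_pow.mpr hm1)
  have hcount (n : ℕ) : (#{k ∈ Icc 1 n | ¬∃ p : ℕ, p.Prime ∧ p ^ m ∣ k} : ℝ)
      = ∑ d ∈ Icc 1 n, (μ d : ℝ) * (n / d ^ m : ℕ) := by
    rw [← Int.cast_natCast, card_mfree_Icc_eq_sum_moebius (by omega)]
    push_cast
    rfl
  rw [hζ, one_div, ← eq_inv_of_mul_eq_one_right (tsum_one_div_pow_mul_tsum_moebius_div_pow hm1)]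
  simp only [hcount]
  exact tendsto_sum_mul_div_pow_div (C := 1) (fun d => mod_cast abs_moebius_le_one) hm1
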